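/- arXiv:2502.13099 — 6 statements merged into one kernel-verified Lean document; each statement's English description precedes it below -/
import Mathlib

section
/- Let S be a commutative monoid written additively and let P : S → ℝ be a polynomial on S. If a, b ∈ S are t-equivalent, i.e. there exist a positive integer N and an element c ∈ S with N·a + c = N·b + c, then P(a) = P(b). -/
/-- A function `P : S → ℝ` on a commutative monoid `S` is a *polynomial on `S`*
if for every tuple `(a₁, …, a_m)` of elements of `S` there is a real polynomial
`p` in `m` variables such that `P (k₁ • a₁ + ⋯ + k_m • a_m) = p (k₁, …, k_m)`
for all nonnegative integers `k₁, …, k_m`. -/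
def IsPolynomialOn {S : Type*} [AddCommMonoid S] (P : S → ℝ) : Prop :=
  ∀ (m : ℕ) (a : Fin m → S), ∃ p : MvPolynomial (Fin m) ℝ,
    ∀ k : Fin m → ℕ, P (∑ i, k i • a i) = MvPolynomial.eval (fun i => (k i : ℝ)) p

open MvPolynomial

/-- One-variable real polynomial vanishing at all naturals is zero. -/
lemma poly_zero_of_nat_eval (q : Polynomial ℝ) (h : ∀ n : ℕ, q.eval (n : ℝ) = 0) :
    q = 0 := by
  apply Polynomial.eq_zero_of_infinite_isRoot
  exact Set.infinite_of_injective_forall_mem (f := fun n : ℕ => (n : ℝ))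
    Nat.cast_injective (fun n => h n)

/-- MvPolynomial over ℝ vanishing at all natural points is zero. -/
lemma mv_zero_of_nat_eval : ∀ (m : ℕ) (p : MvPolynomial (Fin m) ℝ),
    (∀ k : Fin m → ℕ, eval (fun i => (k i : ℝ)) p = 0) → p = 0 := by
  intro m
  induction m with
  | zero =>
      intro p hp
      obtain ⟨r, rfl⟩ := MvPolynomial.C_surjective (Fin 0) p
      have := hp 0
      simpa using this
  | succ n ih =>
      intro p hp
      have hq : ∀ i : ℕ, (finSuccEquiv ℝ n p).coeff i = 0 := by
        intro i
        apply ih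
        intro k
        have hone : Polynomial.map (eval fun j => (k j : ℝ)) (finSuccEquiv ℝ n p) = 0 := by
          apply poly_zero_of_nat_eval
          intro t
          have := hp (Fin.cons t k)
          rw [show (fun i => ((Fin.cons t k : Fin (n+1) → ℕ) i : ℝ)) =
              Fin.cons (t : ℝ) (fun j => (k j : ℝ)) from funext fun i => by
                refine Fin.cases ?_ ?_ i <;> simp] at this
          rw [eval_eq_eval_mv_eval'] at this
          exact this
        have := congrArg (fun r => Polynomial.coeff r i) hone
        simpa using this
      have : finSuccEquiv ℝ n p = 0 := Polynomial.ext fun i => by simp [hq i]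
      have := congrArg (finSuccEquiv ℝ n).symm this
      simpa using this

lemma eval_mv_aeval_poly {m : ℕ} (f : Fin m → Polynomial ℝ) (p : MvPolynomial (Fin m) ℝ)
    (t : ℝ) : (MvPolynomial.aeval f p).eval t = eval (fun i => (f i).eval t) p := by
  induction p using MvPolynomial.induction_on with
  | C r => simp
  | add p q hp hq => simp [hp, hq]
  | mul_X p i hp => simp [hp]

lemma eval_mv_aeval_mv {m : ℕ} (f : Fin m → MvPolynomial (Fin m) ℝ)
    (p : MvPolynomial (Fin m) ℝ) (x : Fin m → ℝ) :
    eval x (MvPolynomial.aeval f p) = eval (fun i => eval x (f i)) p := by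
  induction p using MvPolynomial.induction_on with
  | C r => simp
  | add p q hp hq => simp only [map_add, hp, hq]
  | mul_X p i hp => simp only [map_mul, hp, MvPolynomial.aeval_X, eval_X, map_mul]

/-- If `a` and `b` are `t`-equivalent (that is, `N • a + c = N • b + c` for some
positive integer `N` and some `c ∈ S`), then any polynomial `P` on `S` satisfies
`P a = P b`. -/
theorem polynomial_eq_of_t_equivalent {S : Type*} [AddCommMonoid S]
    (P : S → ℝ) (hP : IsPolynomialOn P) (a b c : S) (N : ℕ) (hN : 0 < N)
    (h : N • a + c = N • b + c) : P a = P b := by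
  obtain ⟨p, hp⟩ := hP 3 ![a, b, c]
  -- the S-level identity
  have hS : ∀ k0 k1 k2 : ℕ,
      (k0 + N) • a + k1 • b + (k2 + 1) • c = k0 • a + (k1 + N) • b + (k2 + 1) • c := by
    intro k0 k1 k2
    have e1 : (k0 + N) • a + k1 • b + (k2 + 1) • c
        = (k0 • a + k1 • b + k2 • c) + (N • a + c) := by
      rw [add_smul, add_smul, one_smul]; abel
    have e2 : k0 • a + (k1 + N) • b + (k2 + 1) • c
        = (k0 • a + k1 • b + k2 • c) + (N • b + c) := by
      rw [add_smul, add_smul, one_smul]; abel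
    rw [e1, e2, h]
  -- rewrite hp in convenient form
  have hp' : ∀ k0 k1 k2 : ℕ,
      P (k0 • a + k1 • b + k2 • c) = eval ![(k0 : ℝ), k1, k2] p := by
    intro k0 k1 k2
    have := hp ![k0, k1, k2]
    rw [Fin.sum_univ_three] at this
    simpa [show (fun i => ((![k0, k1, k2] : Fin 3 → ℕ) i : ℝ)) = ![(k0:ℝ), k1, k2] from
      funext fun i => by fin_cases i <;> simp] using this
  -- substituted polynomials
  set g₁ : Fin 3 → MvPolynomial (Fin 3) ℝ := ![X 0 + C (N : ℝ), X 1, X 2 + 1] with hg₁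
  set g₂ : Fin 3 → MvPolynomial (Fin 3) ℝ := ![X 0, X 1 + C (N : ℝ), X 2 + 1] with hg₂
  have hpp : MvPolynomial.aeval g₁ p = MvPolynomial.aeval g₂ p := by
    rw [← sub_eq_zero]
    apply mv_zero_of_nat_eval
    intro k
    rw [map_sub]
    rw [eval_mv_aeval_mv, eval_mv_aeval_mv]
    have h1 : (fun i => eval (fun j => (k j : ℝ)) (g₁ i)) = ![((k 0 + N : ℕ) : ℝ), ((k 1 : ℕ):ℝ), ((k 2 + 1 : ℕ):ℝ)] := by
      funext i; fin_cases i <;> simp [hg₁] <;> push_cast <;> ring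
    have h2 : (fun i => eval (fun j => (k j : ℝ)) (g₂ i)) = ![((k 0 : ℕ) : ℝ), ((k 1 + N : ℕ):ℝ), ((k 2 + 1 : ℕ):ℝ)] := by
      funext i; fin_cases i <;> simp [hg₂] <;> push_cast <;> ring
    rw [h1, h2, ← hp', ← hp', hS]
    ring
  -- real-level identity
  have hreal : ∀ x y w : ℝ, eval ![x + N, y, w] p = eval ![x, y + N, w] p := by
    intro x y w
    have := congrArg (eval ![x, y, w - 1]) hpp
    rw [eval_mv_aeval_mv, eval_mv_aeval_mv] at this
    have h1 : (fun i => eval ![x, y, w-1] (g₁ i)) = ![x + N, y, w] := by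
      funext i; fin_cases i <;> simp [hg₁] <;> ring
    have h2 : (fun i => eval ![x, y, w-1] (g₂ i)) = ![x, y + N, w] := by
      funext i; fin_cases i <;> simp [hg₂] <;> ring
    rwa [h1, h2] at this
  -- one-variable polynomial along the segment
  set q : Polynomial ℝ := MvPolynomial.aeval ![Polynomial.C 1 - Polynomial.X, Polynomial.X, 0] p with hq
  have hqe : ∀ t : ℝ, q.eval t = eval ![1 - t, t, 0] p := by
    intro t
    rw [hq, eval_mv_aeval_poly]
    have he : (fun i => Polynomial.eval t (![Polynomial.C 1 - Polynomial.X, Polynomial.X, (0 : Polynomial ℝ)] i)) = ![1 - t, t, 0] := by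
      funext i; fin_cases i <;> simp
    rw [he]
  have hper : ∀ t : ℝ, q.eval (t + N) = q.eval t := by
    intro t
    rw [hqe, hqe]
    have := hreal (1 - (t + N)) t 0
    rw [show (1 - (t + N) + N : ℝ) = 1 - t by ring] at this
    rw [this]
  have hkN : ∀ k : ℕ, q.eval ((k * N : ℕ) : ℝ) = q.eval 0 := by
    intro k
    induction k with
    | zero => simp
    | succ n ihn =>
        have : (((n+1) * N : ℕ) : ℝ) = ((n * N : ℕ) : ℝ) + N := by push_cast; ring
        rw [this, hper, ihn]
  have hconst : q - Polynomial.C (q.eval 0) = 0 := by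
    apply Polynomial.eq_zero_of_infinite_isRoot
    refine Set.infinite_of_injective_forall_mem (f := fun k : ℕ => ((k * N : ℕ) : ℝ))
      (fun x y hxy => Nat.eq_of_mul_eq_mul_right hN (Nat.cast_injective hxy)) (fun k => ?_)
    simp only [Set.mem_setOf_eq, Polynomial.IsRoot, Polynomial.eval_sub, Polynomial.eval_C,
      hkN k, sub_self]
  have hq01 : q.eval 1 = q.eval 0 := by
    have := congrArg (Polynomial.eval 1) hconst
    simpa [sub_eq_zero] using this
  have hPa : P a = q.eval 0 := by
    rw [hqe]
    have h0 : (1:ℕ) • a + (0:ℕ) • b + (0:ℕ) • c = a := by simp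
    calc P a = P ((1:ℕ) • a + (0:ℕ) • b + (0:ℕ) • c) := by rw [h0]
      _ = eval ![((1:ℕ):ℝ), ((0:ℕ):ℝ), ((0:ℕ):ℝ)] p := hp' 1 0 0
      _ = eval ![1 - 0, 0, 0] p := by norm_num
  have hPb : P b = q.eval 1 := by
    rw [hqe]
    have : (0:ℕ) • a + (1:ℕ) • b + (0:ℕ) • c = b := by simp
    calc P b = P ((0:ℕ) • a + (1:ℕ) • b + (0:ℕ) • c) := by rw [this]
      _ = eval ![((0:ℕ):ℝ), ((1:ℕ):ℝ), ((0:ℕ):ℝ)] p := hp' 0 1 0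
      _ = eval ![1 - 1, 1, 0] p := by norm_num
  rw [hPa, hPb, hq01]
end

section
/- Let S be a commutative monoid written additively, let n ≥ 1, and let P : S → ℝ be a function. If MP and MP′ are both n-polarizations of P, then MP = MP′. -/
/-!
The difference `D = MP - MP'` is symmetric, additive in each argument and vanishes on the
diagonal. Expanding `D (∑ j ∉ t, a j, …)` by multilinearity and running inclusion–exclusion
over the sets `t` of omitted indices leaves the sum of `D (a ∘ r)` over the surjections
`r : Fin n → Fin n`. These are permutations, so by symmetry that sum is `n! • D a`, while
every diagonal term is `0`.
-/

/-- An *`n`-polarization* of a function `P : S → ℝ` on a commutative monoid `S` is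
a function `MP : Sⁿ → ℝ` that agrees with `P` on the diagonal, is symmetric under
permutations of its arguments, and is additive in each argument. -/
def IsPolarization {S : Type*} [AddCommMonoid S] (n : ℕ) (P : S → ℝ)
    (MP : (Fin n → S) → ℝ) : Prop :=
  (∀ a : S, MP (fun _ => a) = P a) ∧
  (∀ (σ : Equiv.Perm (Fin n)) (a : Fin n → S), MP (a ∘ σ) = MP a) ∧
  (∀ (a : Fin n → S) (i : Fin n) (x y : S),
    MP (Function.update a i (x + y)) =
      MP (Function.update a i x) + MP (Function.update a i y))

open Finset Function

theorem Finset.mem_inf_iff {ι α : Type*} [Fintype α] [DecidableEq α] {s : Finset ι}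
    {f : ι → Finset α} {a : α} : a ∈ s.inf f ↔ ∀ i ∈ s, a ∈ f i := by
  classical
  induction s using Finset.induction_on with
  | empty => simp
  | insert j s _ ih => simp [inf_insert, ih]

namespace MultilinearMap

@[simps!]
def ofMapUpdateAdd {ι M N : Type*} [DecidableEq ι] [AddCommMonoid M] [AddCommGroup N]
    (f : (ι → M) → N)
    (hf : ∀ a i x y, f (update a i (x + y)) = f (update a i x) + f (update a i y)) :
    MultilinearMap ℕ (fun _ : ι => M) N :=
  mk' f hf fun a i c x => map_nsmul (AddMonoidHom.mk' (fun x => f (update a i x)) (hf a i)) c x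

variable {R ι M N : Type*} [Semiring R] [Fintype ι] [DecidableEq ι]
  [AddCommMonoid M] [Module R M] [AddCommGroup N] [Module R N]

theorem sum_comp_surjective_eq_sum_neg_one_pow (f : MultilinearMap R (fun _ : ι => M) N)
    (a : ι → M) :
    ∑ r ∈ univ.filter Surjective, f (a ∘ r) =
      ∑ t : Finset ι, (-1 : ℤ) ^ #t • f (fun _ => ∑ j ∈ tᶜ, a j) := by
  let avoiding (j : ι) : Finset (ι → ι) := univ.filter fun r => ∀ i, r i ≠ j
  have h_surj : univ.inf (fun j => (avoiding j)ᶜ) = univ.filter Surjective := by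
    ext r; simp [avoiding, mem_inf_iff, Surjective]
  have h_inf (t : Finset ι) : t.inf avoiding = Fintype.piFinset fun _ => tᶜ := by
    ext r
    simp only [avoiding, mem_inf_iff, mem_filter, mem_univ, true_and, Fintype.mem_piFinset,
      mem_compl]
    exact ⟨fun h k hk => h _ hk k rfl, fun h j hj k hk => h k (hk ▸ hj)⟩
  rw [← h_surj, inclusion_exclusion_sum_inf_compl, powerset_univ]
  refine sum_congr rfl fun t _ => ?_
  rw [h_inf, f.map_sum_finset]
  rfl

theorem eq_zero_of_map_diagonal_eq_zero [IsAddTorsionFree N]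
    (f : MultilinearMap R (fun _ : ι => M) N)
    (hsymm : ∀ (σ : Equiv.Perm ι) (a : ι → M), f (a ∘ σ) = f a)
    (hdiag : ∀ x, f (fun _ => x) = 0) : f = 0 := by
  ext a
  have h_sum : ∑ r ∈ univ.filter Surjective, f (a ∘ r) =
      #(univ.filter Surjective : Finset (ι → ι)) • f a := by
    rw [← sum_const]
    refine sum_congr rfl fun r hr => ?_
    exact hsymm (Equiv.ofBijective r (Finite.surjective_iff_bijective.1 (mem_filter.1 hr).2)) a
  have h_card : #(univ.filter Surjective : Finset (ι → ι)) ≠ 0 :=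
    card_ne_zero_of_mem (mem_filter.2 ⟨mem_univ _, surjective_id⟩)
  rw [zero_apply, ← nsmul_eq_zero_iff_right h_card, ← h_sum,
    sum_comp_surjective_eq_sum_neg_one_pow]
  simp [hdiag]

end MultilinearMap

theorem polarization_unique_general {S : Type*} [AddCommMonoid S] (n : ℕ)
    (P : S → ℝ) (MP MP' : (Fin n → S) → ℝ)
    (h : IsPolarization n P MP) (h' : IsPolarization n P MP') : MP = MP' := by
  obtain ⟨hdiag, hsymm, hadd⟩ := h
  obtain ⟨hdiag', hsymm', hadd'⟩ := h'
  let D := MultilinearMap.ofMapUpdateAdd (MP - MP') fun a i x y => by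
    simp only [Pi.sub_apply, hadd, hadd']; ring
  have hD_eq_zero : D = 0 := D.eq_zero_of_map_diagonal_eq_zero
    (fun σ a => by simp [D, hsymm, hsymm'])
    (fun x => by simp [D, hdiag, hdiag'])
  funext a
  exact sub_eq_zero.1 (MultilinearMap.congr_fun hD_eq_zero a)

/-- An `n`-polarization of a function `P : S → ℝ`, when it exists, is unique. -/
theorem polarization_unique {S : Type*} [AddCommMonoid S] (n : ℕ) (hn : 1 ≤ n)
    (P : S → ℝ) (MP MP' : (Fin n → S) → ℝ)
    (h : IsPolarization n P MP) (h' : IsPolarization n P MP') : MP = MP' :=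
  polarization_unique_general n P MP MP' h h'
end

section
/- Let S be a commutative monoid written additively, let n ≥ 1, and let P : S → ℝ be a homogeneous polynomial of degree n on S. Then for every x ∈ S and all a₁,…,a_n ∈ S, the quantity MP(a₁,…,a_n) = (1/n!) · Σ_{I ⊆ {1,…,n}} (−1)^{n−|I|} · P(x + Σ_{i∈I} aᵢ) (the sum running over all subsets I of {1,…,n}, including the empty set) is independent of the choice of x, and the function MP : Sⁿ → ℝ so defined is an n-polarization of P: it agrees with P on the diagonal, is symmetric under permutations of its arguments, and is additive in each argument. -/
/-!
With `Δ_u P (x) = P (x + u) - P x`, the candidate is `(1/n!) Δ_{a₁} ⋯ Δ_{aₙ} P (x)`.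
Along a tuple `c`, `P (∑ kⱼ cⱼ) = p (k)` for a homogeneous polynomial `p` of degree `n`, and the
difference in the direction `cⱼ` kills every monomial of `p` not containing `Xⱼ`. Hence `n`
differences in distinct directions `j₁, …, jₙ` leave only the coefficient of `X_{j₁} ⋯ X_{jₙ}`,
a constant: this is the independence of the base point. Additivity in `aᵢ` then follows from
`Δ_{x+y} Q (z) = Δ_y Q (z + x) + Δ_x Q (z)`, symmetry is a reindexing, and on the diagonal
`P (k • a) = kⁿ P a` reduces the claim to `Δ₁ⁿ (k ↦ kⁿ) = n!`.
-/

/-- A function `P : S → ℝ` on a commutative monoid `S` is a *homogeneous polynomial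
of degree `n` on `S`* if for every tuple `(a₁, …, a_m)` of elements of `S` there is
a homogeneous real polynomial `p` of degree `n` in `m` variables such that
`P (k₁ • a₁ + ⋯ + k_m • a_m) = p (k₁, …, k_m)` for all nonnegative integers `kᵢ`. -/
def IsHomogeneousPolynomialOn {S : Type*} [AddCommMonoid S] (n : ℕ) (P : S → ℝ) : Prop :=
  ∀ (m : ℕ) (a : Fin m → S), ∃ p : MvPolynomial (Fin m) ℝ, p.IsHomogeneous n ∧
    ∀ k : Fin m → ℕ, P (∑ i, k i • a i) = MvPolynomial.eval (fun i => (k i : ℝ)) p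

/-- The candidate polarization: `(1/n!) ∑_{I ⊆ {1,…,n}} (-1)^{n - |I|} P (x + ∑_{i ∈ I} aᵢ)`,
with an auxiliary base point `x ∈ S`. -/
noncomputable def polarCandidate {S : Type*} [AddCommMonoid S] (n : ℕ) (P : S → ℝ)
    (x : S) (a : Fin n → S) : ℝ :=
  (n.factorial : ℝ)⁻¹ *
    ∑ I : Finset (Fin n), (-1 : ℝ) ^ (n - I.card) * P (x + ∑ i ∈ I, a i)

open Finset

theorem Finset.sum_powerset_neg_one_pow_mul_card_pow {ι R : Type*} [CommRing R] (s : Finset ι) :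
    ∑ I ∈ s.powerset, (-1 : R) ^ (#s - #I) * (#I : R) ^ #s = (#s).factorial := by
  have h := congr_fun (fwdDiff_iter_eq_factorial (R := R) (n := #s)) 0
  rw [fwdDiff_iter_eq_sum_shift] at h
  rw [sum_powerset_apply_card fun m => (-1 : R) ^ (#s - m) * (m : R) ^ #s]
  simpa [mul_comm, mul_left_comm, mul_assoc] using h

section PowersetSums

variable {σ R : Type*} [Fintype σ] [DecidableEq σ] [CommRing R]

theorem Finsupp.eq_indicator_of_degree_eq_card {T : Finset σ} {α : σ →₀ ℕ}
    (hdeg : α.degree = #T) (hpos : ∀ j ∈ T, α j ≠ 0) :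
    α = Finsupp.indicator T fun _ _ => 1 := by
  have hone : ∀ j ∈ T, 1 ≤ α j := fun j hj => Nat.one_le_iff_ne_zero.mpr (hpos j hj)
  have hsplit : ∑ j ∈ T, α j + ∑ j ∈ Tᶜ, α j = ∑ j ∈ T, 1 := by
    rw [sum_add_sum_compl, ← Finsupp.degree_eq_sum, hdeg, card_eq_sum_ones]
  have hle : ∑ j ∈ T, 1 ≤ ∑ j ∈ T, α j := Finset.sum_le_sum hone
  have hT : ∑ j ∈ T, 1 = ∑ j ∈ T, α j := by omega
  have hTc : ∑ j ∈ Tᶜ, α j = 0 := by omega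
  ext j
  rw [Finsupp.indicator_apply]
  split_ifs with hj
  · exact ((sum_eq_sum_iff_of_le hone).mp hT j hj).symm
  · exact sum_eq_zero_iff.mp hTc j (mem_compl.mpr hj)

theorem sum_powerset_prod_pow_add_indicator (T : Finset σ) (x : σ → R) (α : σ →₀ ℕ) :
    ∑ I ∈ T.powerset, (-1) ^ (#T - #I) * ∏ j, (x j + if j ∈ I then 1 else 0) ^ α j =
      (∏ j ∈ T, ((x j + 1) ^ α j - x j ^ α j)) * ∏ j ∈ Tᶜ, x j ^ α j := by
  simp_rw [sub_eq_add_neg, prod_add, sum_mul]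
  refine sum_congr rfl fun I hI => ?_
  have hIT := mem_powerset.mp hI
  rw [prod_neg, card_sdiff_of_subset hIT, ← prod_mul_prod_compl T, ← prod_sdiff hIT]
  have hin : ∀ j ∈ I, (x j + if j ∈ I then 1 else 0) ^ α j = (x j + 1) ^ α j :=
    fun j hj => by rw [if_pos hj]
  have hout : ∀ j ∉ I, (x j + if j ∈ I then 1 else 0) ^ α j = x j ^ α j :=
    fun j hj => by rw [if_neg hj, add_zero]
  rw [prod_congr rfl hin, prod_congr rfl fun j hj => hout j (mem_sdiff.mp hj).2,
    prod_congr rfl fun j hj => hout j fun h => mem_compl.mp hj (hIT h)]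
  ring

theorem sum_powerset_prod_pow_add_indicator_of_degree_eq {T : Finset σ} (x : σ → R)
    {α : σ →₀ ℕ} (hdeg : α.degree = #T) :
    ∑ I ∈ T.powerset, (-1) ^ (#T - #I) * ∏ j, (x j + if j ∈ I then 1 else 0) ^ α j =
      if α = Finsupp.indicator T (fun _ _ => 1) then 1 else 0 := by
  rw [sum_powerset_prod_pow_add_indicator]
  by_cases hpos : ∀ j ∈ T, α j ≠ 0
  · have hα := Finsupp.eq_indicator_of_degree_eq_card hdeg hpos
    rw [if_pos hα, hα]
    simp only [Finsupp.indicator_apply]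
    rw [prod_eq_one fun j hj => by simp [hj], prod_eq_one fun j hj => by simp [mem_compl.mp hj],
      mul_one]
  · simp only [not_forall, not_not] at hpos
    obtain ⟨j, hj, hαj⟩ := hpos
    have hne : α ≠ Finsupp.indicator T (fun _ _ => 1) := fun h => by
      simp [h, Finsupp.indicator_apply, hj] at hαj
    rw [if_neg hne, prod_eq_zero hj (by rw [hαj, pow_zero, pow_zero, sub_self]), zero_mul]

end PowersetSums

namespace MvPolynomial

variable {σ R : Type*} [CommRing R]

theorem IsHomogeneous.eval_smul {p : MvPolynomial σ R} {n : ℕ} (hp : p.IsHomogeneous n)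
    (c : R) (v : σ → R) : eval (c • v) p = c ^ n * eval v p := by
  simp_rw [eval_eq, mul_sum]
  refine sum_congr rfl fun d hd => ?_
  simp_rw [Pi.smul_apply, smul_eq_mul, mul_pow, prod_mul_distrib, prod_pow_eq_pow_sum,
    ← hp.degree_eq_sum_deg_support hd]
  ring

theorem IsHomogeneous.sum_powerset_eval_add_indicator [Fintype σ] [DecidableEq σ]
    {p : MvPolynomial σ R} {T : Finset σ} (hp : p.IsHomogeneous #T) (x : σ → R) :
    ∑ I ∈ T.powerset, (-1) ^ (#T - #I) * eval (fun j => x j + if j ∈ I then 1 else 0) p =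
      coeff (Finsupp.indicator T fun _ _ => 1) p := by
  simp_rw [eval_eq', mul_sum]
  rw [sum_comm]
  have hterm : ∀ α ∈ p.support, ∑ I ∈ T.powerset, (-1) ^ (#T - #I) *
      (coeff α p * ∏ j, (x j + if j ∈ I then 1 else 0) ^ α j) =
        coeff α p * if α = Finsupp.indicator T (fun _ _ => 1) then 1 else 0 := fun α hα => by
    simp_rw [mul_left_comm _ (coeff α p), ← mul_sum]
    rw [sum_powerset_prod_pow_add_indicator_of_degree_eq x]
    rw [Finsupp.degree_apply, ← hp.degree_eq_sum_deg_support hα]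
  rw [sum_congr rfl hterm]
  simp only [mul_ite, mul_one, mul_zero, sum_ite_eq']
  split_ifs with h
  · rfl
  · exact (notMem_support_iff.mp h).symm

end MvPolynomial

section MixedDiff

variable {S R ι κ : Type*} [AddCommMonoid S] [CommRing R]

/-- `Δ_{a i₁} ⋯ Δ_{a iₖ} P (x)` for `T = {i₁, …, iₖ}`, expanded by inclusion–exclusion. -/
def mixedDiff (P : S → R) (a : ι → S) (T : Finset ι) (x : S) : R :=
  ∑ I ∈ T.powerset, (-1) ^ (#T - #I) * P (x + ∑ i ∈ I, a i)

theorem mixedDiff_congr {P : S → R} {a b : ι → S} {T : Finset ι} (h : ∀ i ∈ T, a i = b i)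
    (x : S) : mixedDiff P a T x = mixedDiff P b T x :=
  sum_congr rfl fun I hI => by rw [sum_congr rfl fun i hi => h i (mem_powerset.mp hI hi)]

theorem mixedDiff_map (P : S → R) (a : κ → S) (T : Finset ι) (e : ι ↪ κ)
    (x : S) : mixedDiff P a (T.map e) x = mixedDiff P (a ∘ e) T x := by
  classical
  have hinj : Set.InjOn (fun I : Finset ι => I.image e) T.powerset :=
    fun _ _ _ _ h => image_injective e.injective h
  rw [mixedDiff, map_eq_image, powerset_image, sum_image hinj]
  refine sum_congr rfl fun I _ => ?_
  rw [card_image_of_injective _ e.injective, card_image_of_injective _ e.injective,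
    sum_image e.injective.injOn, Function.comp_def]

theorem mixedDiff_comp_equiv [Fintype ι] [Fintype κ] (P : S → R) (a : κ → S)
    (σ : ι ≃ κ) (x : S) : mixedDiff P (a ∘ σ) univ x = mixedDiff P a univ x := by
  rw [← map_univ_equiv σ, mixedDiff_map]
  rfl

theorem mixedDiff_insert [DecidableEq ι] (P : S → R) (a : ι → S) {T : Finset ι} {i : ι}
    (hi : i ∉ T) (x : S) :
    mixedDiff P a (insert i T) x = mixedDiff P a T (x + a i) - mixedDiff P a T x := by
  rw [mixedDiff, sum_powerset_insert hi, card_insert_of_notMem hi, add_comm, sub_eq_add_neg,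
    mixedDiff, mixedDiff, ← sum_neg_distrib]
  congr 1
  · refine sum_congr rfl fun I hI => ?_
    have hiI : i ∉ I := fun h => hi (mem_powerset.mp hI h)
    rw [card_insert_of_notMem hiI, sum_insert hiI, add_assoc, Nat.add_sub_add_right]
  · refine sum_congr rfl fun I hI => ?_
    rw [Nat.sub_add_comm (card_le_card (mem_powerset.mp hI)), pow_succ]
    ring

theorem mixedDiff_of_mem [DecidableEq ι] (P : S → R) (a : ι → S) {T : Finset ι} {i : ι}
    (hi : i ∈ T) (x : S) :
    mixedDiff P a T x = mixedDiff P a (T.erase i) (x + a i) - mixedDiff P a (T.erase i) x := by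
  conv_lhs => rw [← insert_erase hi]
  exact mixedDiff_insert P a (notMem_erase i T) x

end MixedDiff

namespace IsHomogeneousPolynomialOn

variable {S : Type*} [AddCommMonoid S] {n : ℕ} {P : S → ℝ}

theorem apply_nsmul (hP : IsHomogeneousPolynomialOn n P) (k : ℕ) (a : S) :
    P (k • a) = (k : ℝ) ^ n * P a := by
  obtain ⟨p, hp, hev⟩ := hP 1 fun _ => a
  have hk := hev fun _ => k
  have h1 := hev fun _ => 1
  simp only [Fin.sum_univ_one, one_smul, Nat.cast_one] at hk h1
  rw [hk, h1, ← hp.eval_smul, Pi.smul_def, smul_eq_mul, mul_one]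

theorem mixedDiff_const (hP : IsHomogeneousPolynomialOn n P) (a : S) :
    mixedDiff P (fun _ : Fin n => a) univ 0 = n.factorial * P a := by
  have h := sum_powerset_neg_one_pow_mul_card_pow (R := ℝ) (univ : Finset (Fin n))
  rw [card_univ, Fintype.card_fin] at h
  simp_rw [mixedDiff, card_univ, Fintype.card_fin, zero_add, sum_const, hP.apply_nsmul,
    ← mul_assoc, ← sum_mul, h]

theorem mixedDiff_sum_nsmul {m : ℕ} (hP : IsHomogeneousPolynomialOn n P) (c : Fin m → S)
    {T : Finset (Fin m)} (hT : #T = n) (k : Fin m → ℕ) :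
    mixedDiff P c T (∑ i, k i • c i) = mixedDiff P c T 0 := by
  subst hT
  obtain ⟨p, hp, hev⟩ := hP m c
  have hshift : ∀ (k : Fin m → ℕ) (I : Finset (Fin m)), P (∑ i, k i • c i + ∑ i ∈ I, c i) =
      MvPolynomial.eval (fun j => (k j : ℝ) + if j ∈ I then 1 else 0) p := fun k I => by
    have h := hev fun j => k j + if j ∈ I then 1 else 0
    simp only [add_smul, ite_smul, one_smul, zero_smul, sum_add_distrib, sum_ite_mem,
      univ_inter] at h
    rw [h]
    congr with j
    split_ifs <;> simp
  have hcoeff : ∀ k : Fin m → ℕ,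
      mixedDiff P c T (∑ i, k i • c i) = p.coeff (Finsupp.indicator T fun _ _ => 1) := by
    intro k
    rw [← hp.sum_powerset_eval_add_indicator]
    exact sum_congr rfl fun I _ => by rw [hshift]
  simpa using (hcoeff k).trans (hcoeff 0).symm

theorem mixedDiff_univ_eq (hP : IsHomogeneousPolynomialOn n P) (a : Fin n → S) (x y : S) :
    mixedDiff P a univ x = mixedDiff P a univ y := by
  suffices h : ∀ x, mixedDiff P a univ x = mixedDiff P a univ 0 by rw [h x, h y]
  intro x
  -- adjoin `x` to the tuple as a zeroth vector, so that `x = ∑ kⱼ cⱼ` for `k = Pi.single 0 1`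
  have h := hP.mixedDiff_sum_nsmul (Fin.cons x a) (T := univ.map (Fin.succEmb n))
    (by simp) (Pi.single 0 1)
  simp only [mixedDiff_map, Pi.single_apply, ite_smul, one_smul, zero_smul, sum_ite_eq',
    mem_univ, if_true, Fin.cons_zero] at h
  exact h

theorem mixedDiff_update_add (hP : IsHomogeneousPolynomialOn n P) (a : Fin n → S) (i : Fin n)
    (x y z : S) :
    mixedDiff P (Function.update a i (x + y)) univ z =
      mixedDiff P (Function.update a i x) univ z + mixedDiff P (Function.update a i y) univ z := by
  set D := mixedDiff P a (univ.erase i)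
  have hsplit : ∀ u w, mixedDiff P (Function.update a i u) univ w = D (w + u) - D w := by
    intro u w
    rw [mixedDiff_of_mem _ _ (mem_univ i), Function.update_self]
    have hcongr : ∀ j ∈ univ.erase i, Function.update a i u j = a j :=
      fun j hj => Function.update_of_ne (ne_of_mem_erase hj) u a
    rw [mixedDiff_congr hcongr, mixedDiff_congr hcongr]
  rw [hsplit, hsplit, ← hP.mixedDiff_univ_eq _ (z + x) z, hsplit, ← add_assoc]
  ring

end IsHomogeneousPolynomialOn

theorem polarCandidate_eq_mixedDiff {S : Type*} [AddCommMonoid S] (n : ℕ) (P : S → ℝ) (x : S)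
    (a : Fin n → S) : polarCandidate n P x a = (n.factorial : ℝ)⁻¹ * mixedDiff P a univ x := by
  rw [polarCandidate, mixedDiff, powerset_univ, card_univ, Fintype.card_fin]

theorem polarization_exists_general {S : Type*} [AddCommMonoid S] (n : ℕ)
    (P : S → ℝ) (hP : IsHomogeneousPolynomialOn n P) :
    (∀ (x y : S) (a : Fin n → S), polarCandidate n P x a = polarCandidate n P y a) ∧
    (∀ a : S, polarCandidate n P 0 (fun _ => a) = P a) ∧
    (∀ (σ : Equiv.Perm (Fin n)) (a : Fin n → S),
      polarCandidate n P 0 (a ∘ σ) = polarCandidate n P 0 a) ∧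
    (∀ (a : Fin n → S) (i : Fin n) (x y : S),
      polarCandidate n P 0 (Function.update a i (x + y)) =
        polarCandidate n P 0 (Function.update a i x) +
          polarCandidate n P 0 (Function.update a i y)) := by
  simp only [polarCandidate_eq_mixedDiff]
  refine ⟨fun x y a => ?_, fun a => ?_, fun σ a => ?_, fun a i x y => ?_⟩
  · rw [hP.mixedDiff_univ_eq a x y]
  · rw [hP.mixedDiff_const, inv_mul_cancel_left₀ (by positivity)]
  · rw [mixedDiff_comp_equiv]
  · rw [hP.mixedDiff_update_add, mul_add]

/-- For a homogeneous polynomial `P` of degree `n` on `S`, the quantity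
`(1/n!) ∑_{I ⊆ {1,…,n}} (-1)^{n-|I|} P (x + ∑_{i ∈ I} aᵢ)` is independent of the
choice of `x ∈ S`, and the resulting function of `(a₁, …, a_n)` is an
`n`-polarization of `P`: it agrees with `P` on the diagonal, is symmetric under
permutations of its arguments, and is additive in each argument. -/
theorem polarization_exists {S : Type*} [AddCommMonoid S] (n : ℕ) (hn : 1 ≤ n)
    (P : S → ℝ) (hP : IsHomogeneousPolynomialOn n P) :
    (∀ (x y : S) (a : Fin n → S), polarCandidate n P x a = polarCandidate n P y a) ∧
    (∀ a : S, polarCandidate n P 0 (fun _ => a) = P a) ∧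
    (∀ (σ : Equiv.Perm (Fin n)) (a : Fin n → S),
      polarCandidate n P 0 (a ∘ σ) = polarCandidate n P 0 a) ∧
    (∀ (a : Fin n → S) (i : Fin n) (x y : S),
      polarCandidate n P 0 (Function.update a i (x + y)) =
        polarCandidate n P 0 (Function.update a i x) +
          polarCandidate n P 0 (Function.update a i y)) :=
  polarization_exists_general n P hP
end

section
/- Let k be an algebraically closed field, let F be a field which is a commutative k-algebra, and let L₁ and L be nonzero finite-dimensional k-subspaces of F. If L₁·L = L, where L₁·L denotes the k-subspace of F spanned by all products f·g with f ∈ L₁ and g ∈ L, then L₁ = k·1, the one-dimensional subspace of constants. -/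
/-- Let `k` be an algebraically closed field and `F` a field which is a commutative
`k`-algebra. If `L₁` and `L` are nonzero finite-dimensional `k`-subspaces of `F` with
`L₁ * L = L` (the product subspace being spanned by all products), then `L₁` is the
one-dimensional subspace `k·1` of constants. -/
theorem subspace_eq_one_of_mul_self {k F : Type*} [Field k] [IsAlgClosed k]
    [Field F] [Algebra k F] (L₁ L : Submodule k F)
    (hL₁ : L₁ ≠ ⊥) (hL : L ≠ ⊥)
    (hL₁fin : FiniteDimensional k L₁) (hLfin : FiniteDimensional k L)
    (h : L₁ * L = L) : L₁ = 1 := by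
  have hLnt : Nontrivial L := Submodule.nontrivial_iff_ne_bot.mpr hL
  have hle : L₁ ≤ 1 := by
    intro x hx
    -- multiplication by x as an endomorphism of L
    have hmem : ∀ y ∈ L, x * y ∈ L := fun y hy => by
      rw [← h]; exact Submodule.mul_mem_mul hx hy
    let f : Module.End k L :=
      { toFun := fun y => ⟨x * y, hmem y y.2⟩
        map_add' := fun a b => by ext; simp [mul_add]
        map_smul' := fun c a => by ext; simp [mul_smul_comm] }
    obtain ⟨μ, hμ⟩ := Module.End.exists_eigenvalue f
    obtain ⟨v, hv⟩ := hμ.exists_hasEigenvector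
    have hv0 : (v : F) ≠ 0 := fun hz => hv.2 (Subtype.ext hz)
    have heq : x * (v : F) = μ • (v : F) := congrArg Subtype.val hv.apply_eq_smul
    have : (x - algebraMap k F μ) * (v : F) = 0 := by
      rw [sub_mul, heq, Algebra.smul_def]; ring
    have hxμ : x = algebraMap k F μ := by
      rcases mul_eq_zero.mp this with h' | h'
      · exact sub_eq_zero.mp h'
      · exact absurd h' hv0
    rw [hxμ, Submodule.one_eq_range]
    exact ⟨μ, rfl⟩
  -- L₁ is a nonzero submodule of the 1-dimensional space `1`
  have h1fin : FiniteDimensional k (1 : Submodule k F) := by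
    rw [Submodule.one_eq_span]
    infer_instance
  have h1rank : Module.finrank k (1 : Submodule k F) = 1 := by
    rw [Submodule.one_eq_span]
    exact finrank_span_singleton one_ne_zero
  have hpos : 0 < Module.finrank k L₁ := by
    have : Nontrivial L₁ := Submodule.nontrivial_iff_ne_bot.mpr hL₁
    exact Module.finrank_pos
  exact Submodule.eq_of_le_of_finrank_le hle (by omega)
end

section
/- Let k be a field, let F be a field which is a commutative k-algebra, and let L be a nonzero finite-dimensional k-subspace of F. Then L is invertible in the semigroup of nonzero finite-dimensional k-subspaces of F — i.e., there exists a nonzero finite-dimensional k-subspace L′ of F with L·L′ = k·1 — if and only if dim_k L = 1. -/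
/-!
If `L * L' = k·1` and `y ∈ L'` is nonzero, then `x * y` is a constant for every `x ∈ L`, so
`L ⊆ k·y⁻¹`, forcing `dim L = 1`. Conversely `k·x` has inverse `k·x⁻¹`.
-/

namespace Submodule

theorem eq_span_singleton_of_le_of_ne_bot {K V : Type*} [DivisionRing K] [AddCommGroup V]
    [Module K V] {L : Submodule K V} {v : V} (hle : L ≤ K ∙ v) (hL : L ≠ ⊥) : L = K ∙ v := by
  obtain ⟨x, hxL, hx0⟩ := exists_mem_ne_zero_of_ne_bot hL
  obtain ⟨c, rfl⟩ := mem_span_singleton.mp (hle hxL)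
  have hc : c ≠ 0 := by rintro rfl; exact hx0 (zero_smul K v)
  have hv : v ∈ L := by simpa [smul_smul, inv_mul_cancel₀ hc] using L.smul_mem c⁻¹ hxL
  exact le_antisymm hle ((span_singleton_le_iff_mem v L).mpr hv)

variable {k A : Type*} [CommSemiring k] [DivisionRing A] [Algebra k A]

theorem le_span_singleton_inv_of_mul_eq_one {L L' : Submodule k A} (h : L * L' = 1) {y : A}
    (hy : y ∈ L') (hy0 : y ≠ 0) : L ≤ k ∙ y⁻¹ := by
  intro x hx
  obtain ⟨c, hc⟩ := mem_one.mp (h ▸ mul_mem_mul hx hy)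
  refine mem_span_singleton.mpr ⟨c, ?_⟩
  rw [Algebra.smul_def, hc, mul_inv_cancel_right₀ hy0]

theorem span_singleton_mul_span_singleton_inv {x : A} (hx : x ≠ 0) :
    (k ∙ x) * (k ∙ x⁻¹) = 1 := by
  rw [span_mul_span, Set.singleton_mul_singleton, mul_inv_cancel₀ hx, one_eq_span]

end Submodule

open Submodule

theorem subspace_invertible_iff_dim_one_general {k F : Type*} [Field k]
    [Field F] [Algebra k F] (L : Submodule k F)
    (hL : L ≠ ⊥) :
    (∃ L' : Submodule k F, L' ≠ ⊥ ∧ FiniteDimensional k L' ∧ L * L' = 1) ↔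
      Module.finrank k L = 1 := by
  constructor
  · rintro ⟨L', hL', -, hmul⟩
    obtain ⟨y, hy, hy0⟩ := exists_mem_ne_zero_of_ne_bot hL'
    rw [eq_span_singleton_of_le_of_ne_bot (le_span_singleton_inv_of_mul_eq_one hmul hy hy0) hL]
    exact finrank_span_singleton (inv_ne_zero hy0)
  · intro hrank
    obtain ⟨x, hx, hx0⟩ := exists_mem_ne_zero_of_ne_bot hL
    rw [eq_span_singleton_of_mem_of_finrank_eq_one hrank hx hx0]
    exact ⟨k ∙ x⁻¹, by simpa using inv_ne_zero hx0, inferInstance,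
      span_singleton_mul_span_singleton_inv hx0⟩

/-- Let `k` be a field and `F` a field which is a commutative `k`-algebra. A nonzero
finite-dimensional `k`-subspace `L` of `F` is invertible in the multiplicative
semigroup of nonzero finite-dimensional `k`-subspaces of `F` (i.e. `L * L' = k·1` for
some nonzero finite-dimensional subspace `L'`) if and only if `dim_k L = 1`. -/
theorem subspace_invertible_iff_dim_one {k F : Type*} [Field k]
    [Field F] [Algebra k F] (L : Submodule k F)
    (hL : L ≠ ⊥) (hLfin : FiniteDimensional k L) :
    (∃ L' : Submodule k F, L' ≠ ⊥ ∧ FiniteDimensional k L' ∧ L * L' = 1) ↔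
      Module.finrank k L = 1 :=
  subspace_invertible_iff_dim_one_general L hL
end

section
/- Let A and B be finite nonempty subsets of the lattice ℤⁿ ⊆ ℝⁿ. Then there exists a finite nonempty subset C of ℤⁿ with A + C = B + C (Minkowski sums of sets) if and only if the convex hulls of A and B in ℝⁿ are equal. -/
/-!
If `A + C = B + C` with `C` finite, separate a point `a ∈ A` outside `conv B` by a linear
functional `f` and choose `c ∈ C` maximising `f`; writing `a + c = b + c'` gives `f a ≤ f b`,
a contradiction. Conversely, by Carathéodory every point of `(1 + t) • conv F` in `ℝⁿ`,
`t ≥ n`, is a point of `F` plus a point of `t • conv F`, so `F + t • conv F = (1 + t) • conv F`.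
Hence, with `P` the common hull, the finite set `C` of lattice points of `(n + 1) • P` satisfies
`A + C = {lattice points of (n + 2) • P} = B + C`.
-/

open Pointwise Module

section Separation

variable {E : Type*} [AddCommGroup E] [Module ℝ E] [TopologicalSpace E]
  [IsTopologicalAddGroup E] [ContinuousSMul ℝ E] [LocallyConvexSpace ℝ E]

theorem subset_closedConvexHull_of_add_subset_add {A B C : Set E} (hC : C.Finite)
    (hCne : C.Nonempty) (h : A + C ⊆ B + C) : A ⊆ closedConvexHull ℝ B := by
  intro a ha
  by_contra ha'
  obtain ⟨f, u, hfB, hfa⟩ :=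
    geometric_hahn_banach_closed_point convex_closedConvexHull isClosed_closedConvexHull ha'
  obtain ⟨c, hc, hcmax⟩ := C.exists_max_image f hC hCne
  obtain ⟨b, hb, c', hc', hbc⟩ := h (Set.add_mem_add ha hc)
  have hfab : f b + f c' = f a + f c := by simpa using congrArg f hbc
  linarith [hfB b (subset_closedConvexHull hb), hcmax c' hc']

theorem convexHull_eq_of_add_eq_add [T2Space E] {A B C : Set E} (hA : A.Finite) (hB : B.Finite)
    (hC : C.Finite) (hCne : C.Nonempty) (h : A + C = B + C) :
    convexHull ℝ A = convexHull ℝ B := by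
  have key : ∀ {X Y : Set E}, Y.Finite → X + C = Y + C → convexHull ℝ X ⊆ convexHull ℝ Y :=
    fun hY hXY => convexHull_min
      ((subset_closedConvexHull_of_add_subset_add hC hCne hXY.le).trans
        (closedConvexHull_min (subset_convexHull ℝ _) (convex_convexHull ℝ _)
          (hY.isClosed_convexHull ℝ)))
      (convex_convexHull ℝ _)
  exact (key hB h).antisymm (key hA h.symm)

end Separation

section Caratheodory

variable {E : Type*} [AddCommGroup E] [Module ℝ E]

theorem Finset.sum_smul_mem_smul_convexHull {ι : Type*} {s : Finset ι} {c : ι → ℝ} {z : ι → E}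
    {F : Set E} (hc : ∀ i ∈ s, 0 ≤ c i) (hpos : 0 < ∑ i ∈ s, c i) (hz : ∀ i ∈ s, z i ∈ F) :
    ∑ i ∈ s, c i • z i ∈ (∑ i ∈ s, c i) • convexHull ℝ F :=
  ⟨s.centerMass c z, s.centerMass_mem_convexHull hc hpos hz,
    smul_inv_smul₀ hpos.ne' _⟩

variable [FiniteDimensional ℝ E]

theorem smul_convexHull_subset_add_smul_convexHull {F : Set E} {t : ℝ}
    (hdt : (finrank ℝ E : ℝ) ≤ t) (ht : 0 < t) :
    (1 + t) • convexHull ℝ F ⊆ F + t • convexHull ℝ F := by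
  classical
  rintro _ ⟨y, hy, rfl⟩
  obtain ⟨ι, _, z, w, hzF, hz, hw₀, hw₁, rfl⟩ := eq_pos_convex_span_of_mem_convexHull hy
  have hcard : Fintype.card ι ≤ finrank ℝ E + 1 :=
    hz.card_le_finrank_succ.trans (Nat.succ_le_succ (Submodule.finrank_le _))
  have hcard' : (Fintype.card ι : ℝ) ≤ 1 + t := by
    have := (Nat.cast_le (α := ℝ)).2 hcard
    push_cast at this
    linarith
  obtain ⟨i₀, -, hi₀⟩ : ∃ i₀ ∈ Finset.univ, (1 + t)⁻¹ ≤ w i₀ := by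
    refine Finset.exists_le_of_sum_le (Finset.nonempty_of_sum_ne_zero (hw₁ ▸ one_ne_zero)) ?_
    rwa [hw₁, Finset.sum_const, Finset.card_univ, nsmul_eq_mul, ← div_eq_mul_inv,
      div_le_one (by positivity)]
  set c : ι → ℝ := fun i => (1 + t) * w i - if i = i₀ then 1 else 0
  have hc : ∀ i ∈ Finset.univ, 0 ≤ c i := by
    intro i _
    by_cases h : i = i₀
    · subst h
      simpa [c] using (inv_le_iff_one_le_mul₀' (by positivity)).mp hi₀
    · simpa [c, h] using mul_nonneg (by positivity) (hw₀ i).le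
  have hcsum : ∑ i, c i = t := by
    simp [c, Finset.sum_sub_distrib, ← Finset.mul_sum, hw₁]
  have hcz : ∑ i, c i • z i = (1 + t) • ∑ i, w i • z i - z i₀ := by
    simp [c, sub_smul, Finset.sum_sub_distrib, Finset.smul_sum, smul_smul]
  refine ⟨z i₀, hzF (Set.mem_range_self i₀), _, ?_, add_sub_cancel (z i₀) _⟩
  rw [← hcz, ← hcsum]
  exact Finset.sum_smul_mem_smul_convexHull hc (hcsum ▸ ht) fun i _ => hzF (Set.mem_range_self i)

theorem add_smul_convexHull_eq {F : Set E} {t : ℝ} (hdt : (finrank ℝ E : ℝ) ≤ t) (ht : 0 < t) :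
    F + t • convexHull ℝ F = (1 + t) • convexHull ℝ F := by
  refine subset_antisymm ?_ (smul_convexHull_subset_add_smul_convexHull hdt ht)
  rw [(convex_convexHull ℝ F).add_smul zero_le_one ht.le, one_smul]
  exact Set.add_subset_add_right (subset_convexHull ℝ F)

end Caratheodory

theorem Bornology.IsBounded.finite_preimage_intCast {ι : Type*} [Fintype ι] {S : Set (ι → ℝ)}
    (hS : Bornology.IsBounded S) : ((fun (a : ι → ℤ) i => (a i : ℝ)) ⁻¹' S).Finite :=
  (Metric.isCompact_of_isClosed_isBounded (isClosed_discrete _)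
    (Real.isometry_intCast.postcomp_pi.antilipschitz.isBounded_preimage hS)).finite_of_discrete

theorem Set.add_preimage_eq_preimage_image_add {M N F : Type*} [AddGroup M] [AddGroup N]
    [FunLike F M N] [AddMonoidHomClass F M N] (φ : F) (S : Set M) (T : Set N) :
    S + φ ⁻¹' T = φ ⁻¹' (φ '' S + T) := by
  ext x
  constructor
  · rintro ⟨s, hs, m, hm, rfl⟩
    exact ⟨φ s, ⟨s, hs, rfl⟩, φ m, hm, (map_add φ s m).symm⟩
  · rintro ⟨_, ⟨s, hs, rfl⟩, u, hu, hx⟩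
    refine ⟨s, hs, -s + x, ?_, add_neg_cancel_left s x⟩
    rwa [Set.mem_preimage, map_add, map_neg, ← hx, neg_add_cancel_left]

theorem finset_cancellative_iff_convexHull_eq_general {n : ℕ}
    (A B : Set (Fin n → ℤ)) (hAfin : A.Finite) (hBfin : B.Finite)
    (hA : A.Nonempty) :
    (∃ C : Set (Fin n → ℤ), C.Finite ∧ C.Nonempty ∧ A + C = B + C) ↔
      convexHull ℝ ((fun (a : Fin n → ℤ) (i : Fin n) => (a i : ℝ)) '' A) =
        convexHull ℝ ((fun (a : Fin n → ℤ) (i : Fin n) => (a i : ℝ)) '' B) := by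
  let φ := (Int.castAddHom ℝ).compLeft (Fin n)
  change _ ↔ convexHull ℝ (φ '' A) = convexHull ℝ (φ '' B)
  constructor
  · rintro ⟨C, hC, hCne, hABC⟩
    refine convexHull_eq_of_add_eq_add (hAfin.image φ) (hBfin.image φ) (hC.image φ)
      (hCne.image φ) ?_
    rw [← Set.image_add, ← Set.image_add, hABC]
  · intro hAB
    have hdim : (finrank ℝ (Fin n → ℝ) : ℝ) ≤ n + 1 := by simp
    refine ⟨φ ⁻¹' ((n + 1 : ℝ) • convexHull ℝ (φ '' A)), ?_, ?_, ?_⟩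
    · exact ((hAfin.image φ).isCompact_convexHull ℝ).isBounded.smul₀ _ |>.finite_preimage_intCast
    · obtain ⟨a, ha⟩ := hA
      refine ⟨(n + 1 : ℕ) • a, ?_⟩
      rw [Set.mem_preimage, map_nsmul, ← Nat.cast_smul_eq_nsmul ℝ, Nat.cast_succ]
      exact Set.smul_mem_smul_set (subset_convexHull ℝ _ (Set.mem_image_of_mem φ ha))
    · rw [Set.add_preimage_eq_preimage_image_add, Set.add_preimage_eq_preimage_image_add,
        add_smul_convexHull_eq hdim (by positivity), hAB,
        add_smul_convexHull_eq hdim (by positivity)]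

/-- For finite nonempty subsets `A, B ⊆ ℤⁿ`, there exists a finite nonempty subset
`C ⊆ ℤⁿ` with `A + C = B + C` (Minkowski sum) if and only if the convex hulls of
`A` and `B` in `ℝⁿ` coincide. -/
theorem finset_cancellative_iff_convexHull_eq {n : ℕ}
    (A B : Set (Fin n → ℤ)) (hAfin : A.Finite) (hBfin : B.Finite)
    (hA : A.Nonempty) (hB : B.Nonempty) :
    (∃ C : Set (Fin n → ℤ), C.Finite ∧ C.Nonempty ∧ A + C = B + C) ↔
      convexHull ℝ ((fun (a : Fin n → ℤ) (i : Fin n) => (a i : ℝ)) '' A) =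
        convexHull ℝ ((fun (a : Fin n → ℤ) (i : Fin n) => (a i : ℝ)) '' B) :=
  finset_cancellative_iff_convexHull_eq_general A B hAfin hBfin hA
end
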